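/- The density f(x, s) = 1/(3·log 2·(1+x)) on (0,1) × ℙ¹(𝔽₂) is a fixed point of the Perron–Frobenius operator at parameter β = 2: for every x ∈ (0,1) and every s ∈ ℙ¹(𝔽₂), the series ∑_{k=1}^{∞} (x+k)^{-2} · f(1/(x+k), h_k·s) converges and equals f(x, s), where h_k is the Möbius action on ℙ¹(𝔽₂) of the mod-2 reduction of the matrix with rows (0, 1) and (1, k). -/
import Mathlib

open Matrix

/-- The projective line `ℙ¹(𝔽₂)` over the field with two elements. -/
abbrev P1F2 := Projectivization (ZMod 2) (Fin 2 → ZMod 2)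

/-- The Möbius (projective linear) action of an invertible `2×2` matrix over `𝔽₂`
on the projective line `ℙ¹(𝔽₂)`. -/
noncomputable def mobius (M : Matrix (Fin 2) (Fin 2) (ZMod 2)) (h : Invertible M) :
    P1F2 → P1F2 :=
  Projectivization.map (M.toLinearEquiv' h).toLinearMap (M.toLinearEquiv' h).injective

/-- Reduction mod 2 of an integer `2×2` matrix. -/
def red2 (m : Matrix (Fin 2) (Fin 2) ℤ) : Matrix (Fin 2) (Fin 2) (ZMod 2) :=
  m.map (Int.cast : ℤ → ZMod 2)

/-- The Möbius action `h_k` on `ℙ¹(𝔽₂)` of the mod-2 reduction of the integer matrix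
with rows `(0, 1)` and `(1, k)`. -/
noncomputable def hAct (k : ℤ) : P1F2 → P1F2 :=
  mobius (red2 !![0, 1; 1, k])
    (Matrix.invertibleOfIsUnitDet _ (by
      simp [red2, Matrix.det_fin_two, Matrix.map_apply]))

/-- The Gauss-type density `f(x, s) = 1/(3·log 2·(1+x))` on `(0,1) × ℙ¹(𝔽₂)`. -/
noncomputable def gaussDensity (p : ℝ × P1F2) : ℝ :=
  1 / (3 * Real.log 2 * (1 + p.1))

/-- The density `f(x,s) = 1/(3·log 2·(1+x))` is a fixed point of the Perron–Frobenius
operator at parameter `β = 2`: for every `x ∈ (0,1)` and every `s ∈ ℙ¹(𝔽₂)`, the series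
`∑_{k=1}^∞ (x+k)⁻² · f(1/(x+k), h_k·s)` converges and its sum equals `f(x, s)`, where
`h_k` is the Möbius action of the mod-2 reduction of the matrix with rows `(0,1)`,
`(1,k)`. -/
theorem gaussDensity_perron_frobenius_fixed (x : ℝ) (hx : x ∈ Set.Ioo (0 : ℝ) 1)
    (s : P1F2) :
    HasSum
      (fun k : ℕ =>
        ((x + ((k : ℝ) + 1)) ^ 2)⁻¹ *
          gaussDensity (1 / (x + ((k : ℝ) + 1)), hAct ((k : ℤ) + 1) s))
      (gaussDensity (x, s)) := by
  obtain ⟨hx0, hx1⟩ := hx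
  have hc : (0:ℝ) < 3 * Real.log 2 := by positivity
  have hy : ∀ k : ℕ, (0:ℝ) < x + ((k : ℝ) + 1) := fun k => by positivity
  -- telescoping sum
  have key : HasSum (fun k : ℕ => (x + ((k:ℝ) + 1))⁻¹ - (x + ((k:ℝ) + 1) + 1)⁻¹)
      (x + 1)⁻¹ := by
    rw [hasSum_iff_tendsto_nat_of_nonneg]
    · have hsum : ∀ n : ℕ, ∑ k ∈ Finset.range n,
          ((x + ((k:ℝ) + 1))⁻¹ - (x + ((k:ℝ) + 1) + 1)⁻¹)
          = (x + 1)⁻¹ - (x + ((n:ℝ) + 1))⁻¹ := by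
        intro n
        induction n with
        | zero => simp
        | succ n ih =>
          rw [Finset.sum_range_succ, ih]
          push_cast; ring
      simp only [hsum]
      have : Filter.Tendsto (fun n : ℕ => (x + ((n:ℝ) + 1))⁻¹) Filter.atTop (nhds 0) := by
        apply Filter.Tendsto.inv_tendsto_atTop
        apply Filter.tendsto_atTop_add_const_left
        exact Filter.tendsto_atTop_add_const_right _ _ tendsto_natCast_atTop_atTop
      simpa using (tendsto_const_nhds.sub this)
    · intro k
      have h1 : (0:ℝ) < x + ((k:ℝ) + 1) := hy k
      have h2 : x + ((k:ℝ) + 1) ≤ x + ((k:ℝ) + 1) + 1 := by linarith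
      have := inv_anti₀ h1 h2
      linarith
  have hval : gaussDensity (x, s) = (3 * Real.log 2)⁻¹ * (x + 1)⁻¹ := by
    unfold gaussDensity
    have hc' : (3 * Real.log 2) ≠ 0 := ne_of_gt hc
    have h2' : (1:ℝ) + x ≠ 0 := by positivity
    field_simp
    ring
  have hfun : (fun k : ℕ =>
        ((x + ((k : ℝ) + 1)) ^ 2)⁻¹ *
          gaussDensity (1 / (x + ((k : ℝ) + 1)), hAct ((k : ℤ) + 1) s))
      = fun k : ℕ => (3 * Real.log 2)⁻¹ *
          ((x + ((k:ℝ) + 1))⁻¹ - (x + ((k:ℝ) + 1) + 1)⁻¹) := by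
    funext k
    unfold gaussDensity
    have h1 : (0:ℝ) < x + ((k:ℝ) + 1) := hy k
    have h1' : x + ((k:ℝ) + 1) ≠ 0 := ne_of_gt h1
    have h2' : x + ((k:ℝ) + 1) + 1 ≠ 0 := by positivity
    have hc' : (3 * Real.log 2) ≠ 0 := ne_of_gt hc
    simp only
    field_simp
    ring
  rw [hfun, hval]
  exact key.mul_left _
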